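/- Let w ∈ ℝ and let h : [−π/2, π/2] → ℝ be twice continuously differentiable, odd (h(−t) = −h(t) for all t), with h'(π/2) = 0. Define x(t) := (w + h(t)) cos t − h'(t) sin t and y(t) := (w + h(t)) sin t + h'(t) cos t. Then (2π/3) ∫_{−π/2}^{π/2} x(t) (y'(t) x(t) − y(t) x'(t)) dt = 4π ( w³/3 + w ∫₀^{π/2} (h(t)² − (1/2) h'(t)²) cos t dt ). -/

import Mathlib

/-! With `p = w + h`, the curve `γ = p e^{it} + p' i e^{it}` has velocity `(p + p'') i e^{it}`,
so `y' x - y x' = p (p + p'')` and the integrand is `x p (p + p'')`. This is the derivative of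
`B = p² p' cos - p p'² sin / 2`, which vanishes at `±π/2`, plus
`G = p³ cos - (3/2) p p'² cos + p'³ sin / 2`. Since `h` is odd, `h'` is even, and
`G t + G (-t) = 2 w³ cos t + 6 w (h² - h'²/2) cos t`, so folding `[-π/2, π/2]` onto `[0, π/2]`
gives the formula. -/

open Real MeasureTheory Set intervalIntegral

theorem even_of_hasDerivWithinAt_of_odd {f f' : ℝ → ℝ} {s : Set ℝ} (hs : UniqueDiffOn ℝ s)
    (hneg : ∀ t ∈ s, -t ∈ s) (hodd : ∀ t ∈ s, f (-t) = -f t)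
    (hf : ∀ t ∈ s, HasDerivWithinAt f (f' t) s t) {t : ℝ} (ht : t ∈ s) : f' (-t) = f' t := by
  have hreflect : HasDerivWithinAt (fun u => -f (-u)) (f' (-t)) s t := by
    simpa using ((hf (-t) (hneg t ht)).comp t (hasDerivAt_neg t).hasDerivWithinAt hneg).fun_neg
  exact (hs t ht).eq_deriv s
    (hreflect.congr (fun u hu => by simp [hodd u hu]) (by simp [hodd t ht])) (hf t ht)

theorem integral_neg_eq_integral_add_comp_neg {E : Type*} [NormedAddCommGroup E]
    [NormedSpace ℝ E] {f : ℝ → E} {a : ℝ} (hf : IntervalIntegrable f volume (-a) a) :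
    ∫ t in -a..a, f t = ∫ t in 0..a, (f t + f (-t)) := by
  have hzero : (0 : ℝ) ∈ uIcc (-a) a := by
    rcases le_total 0 a with ha | ha <;> simp [ha]
  have hleft : IntervalIntegrable f volume (-a) 0 := hf.mono_set (uIcc_subset_uIcc_left hzero)
  have hright : IntervalIntegrable f volume 0 a := hf.mono_set (uIcc_subset_uIcc_right hzero)
  rw [← integral_add_adjacent_intervals hleft hright, integral_add hright, integral_comp_neg,
    neg_zero, add_comm]
  simpa using (IntervalIntegrable.iff_comp_neg (by finiteness)).1 hleft.symm

section SupportCurve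

variable {p p' p'' : ℝ → ℝ} {s : Set ℝ} {t : ℝ}

theorem hasDerivWithinAt_supportCurve_fst (hp : HasDerivWithinAt p (p' t) s t)
    (hp' : HasDerivWithinAt p' (p'' t) s t) :
    HasDerivWithinAt (fun u => p u * cos u - p' u * sin u) (-((p t + p'' t) * sin t)) s t :=
  ((hp.fun_mul (hasDerivAt_cos t).hasDerivWithinAt).fun_sub
    (hp'.fun_mul (hasDerivAt_sin t).hasDerivWithinAt)).congr_deriv (by ring)

theorem hasDerivWithinAt_supportCurve_snd (hp : HasDerivWithinAt p (p' t) s t)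
    (hp' : HasDerivWithinAt p' (p'' t) s t) :
    HasDerivWithinAt (fun u => p u * sin u + p' u * cos u) ((p t + p'' t) * cos t) s t :=
  ((hp.fun_mul (hasDerivAt_sin t).hasDerivWithinAt).fun_add
    (hp'.fun_mul (hasDerivAt_cos t).hasDerivWithinAt)).congr_deriv (by ring)

theorem supportCurve_cross_eq {x y x' y' : ℝ → ℝ} (hs : UniqueDiffWithinAt ℝ s t)
    (hp : HasDerivWithinAt p (p' t) s t) (hp' : HasDerivWithinAt p' (p'' t) s t)
    (hx : ∀ u, x u = p u * cos u - p' u * sin u) (hy : ∀ u, y u = p u * sin u + p' u * cos u)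
    (hx' : HasDerivWithinAt x (x' t) s t) (hy' : HasDerivWithinAt y (y' t) s t) :
    x t * (y' t * x t - y t * x' t) =
      (p t * cos t - p' t * sin t) * (p t * (p t + p'' t)) := by
  rw [hs.eq_deriv s hx' ((hasDerivWithinAt_supportCurve_fst hp hp').congr (fun u _ => hx u) (hx t)),
    hs.eq_deriv s hy' ((hasDerivWithinAt_supportCurve_snd hp hp').congr (fun u _ => hy u) (hy t)),
    hx, hy]
  linear_combination (p t * cos t - p' t * sin t) * p t * (p t + p'' t) * sin_sq_add_cos_sq t

noncomputable def volumeBoundaryTerm (p p' : ℝ → ℝ) (t : ℝ) : ℝ :=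
  p t ^ 2 * p' t * cos t - p t * p' t ^ 2 * sin t / 2

noncomputable def volumeReducedIntegrand (p p' : ℝ → ℝ) (t : ℝ) : ℝ :=
  p t ^ 3 * cos t - 3 / 2 * p t * p' t ^ 2 * cos t + p' t ^ 3 * sin t / 2

theorem volumeBoundaryTerm_eq_zero (hcos : cos t = 0) (hp' : p' t = 0) :
    volumeBoundaryTerm p p' t = 0 := by
  simp [volumeBoundaryTerm, hcos, hp']

theorem hasDerivAt_volumeBoundaryTerm (hp : HasDerivAt p (p' t) t)
    (hp' : HasDerivAt p' (p'' t) t) :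
    HasDerivAt (volumeBoundaryTerm p p')
      ((p t * cos t - p' t * sin t) * (p t * (p t + p'' t)) - volumeReducedIntegrand p p' t) t := by
  refine ((((hp.fun_pow 2).fun_mul hp').fun_mul (hasDerivAt_cos t)).fun_sub
    (((hp.fun_mul (hp'.fun_pow 2)).fun_mul (hasDerivAt_sin t)).div_const 2)).congr_deriv ?_
  simp only [volumeReducedIntegrand]
  ring

theorem ContinuousOn.volumeReducedIntegrand (hp : ContinuousOn p s) (hp' : ContinuousOn p' s) :
    ContinuousOn (volumeReducedIntegrand p p') s := by
  unfold _root_.volumeReducedIntegrand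
  fun_prop

theorem integral_supportCurve_eq {a b : ℝ} (hab : a ≤ b)
    (hp : ∀ t ∈ Icc a b, HasDerivWithinAt p (p' t) (Icc a b) t)
    (hp' : ∀ t ∈ Icc a b, HasDerivWithinAt p' (p'' t) (Icc a b) t)
    (hp'' : ContinuousOn p'' (Icc a b)) :
    ∫ t in a..b, (p t * cos t - p' t * sin t) * (p t * (p t + p'' t)) =
      volumeBoundaryTerm p p' b - volumeBoundaryTerm p p' a +
        ∫ t in a..b, volumeReducedIntegrand p p' t := by
  have hpc : ContinuousOn p (Icc a b) := fun t ht => (hp t ht).continuousWithinAt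
  have hp'c : ContinuousOn p' (Icc a b) := fun t ht => (hp' t ht).continuousWithinAt
  have hG : IntervalIntegrable (volumeReducedIntegrand p p') volume a b :=
    (hpc.volumeReducedIntegrand hp'c).intervalIntegrable_of_Icc hab
  have hF : IntervalIntegrable (fun t => (p t * cos t - p' t * sin t) * (p t * (p t + p'' t)))
      volume a b := ContinuousOn.intervalIntegrable_of_Icc hab (by fun_prop)
  have hB : ContinuousOn (volumeBoundaryTerm p p') (Icc a b) := by
    unfold volumeBoundaryTerm
    fun_prop
  have hderiv : ∀ t ∈ Ioo a b, HasDerivAt (volumeBoundaryTerm p p')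
      ((p t * cos t - p' t * sin t) * (p t * (p t + p'' t)) - volumeReducedIntegrand p p' t) t :=
    fun t ht => hasDerivAt_volumeBoundaryTerm
      ((hp t (Ioo_subset_Icc_self ht)).hasDerivAt (Icc_mem_nhds ht.1 ht.2))
      ((hp' t (Ioo_subset_Icc_self ht)).hasDerivAt (Icc_mem_nhds ht.1 ht.2))
  rw [← integral_eq_sub_of_hasDerivAt_of_le hab hB hderiv (hF.sub hG), integral_sub hF hG,
    sub_add_cancel]

end SupportCurve

theorem volumeReducedIntegrand_add_comp_neg {w : ℝ} {h h' : ℝ → ℝ} {t : ℝ}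
    (hodd : h (-t) = -h t) (heven : h' (-t) = h' t) :
    volumeReducedIntegrand (fun u => w + h u) h' t +
        volumeReducedIntegrand (fun u => w + h u) h' (-t) =
      2 * w ^ 3 * cos t + 6 * w * ((h t ^ 2 - 1 / 2 * h' t ^ 2) * cos t) := by
  simp only [volumeReducedIntegrand, hodd, heven, cos_neg, sin_neg]
  ring

theorem integral_supportCurve_of_odd {w : ℝ} {h h' h'' : ℝ → ℝ}
    (hh : ∀ t ∈ Icc (-(π / 2)) (π / 2), HasDerivWithinAt h (h' t) (Icc (-(π / 2)) (π / 2)) t)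
    (hh' : ∀ t ∈ Icc (-(π / 2)) (π / 2), HasDerivWithinAt h' (h'' t) (Icc (-(π / 2)) (π / 2)) t)
    (hh'' : ContinuousOn h'' (Icc (-(π / 2)) (π / 2)))
    (hodd : ∀ t ∈ Icc (-(π / 2)) (π / 2), h (-t) = -h t) (hbc : h' (π / 2) = 0) :
    ∫ t in -(π / 2)..π / 2, ((w + h t) * cos t - h' t * sin t) * ((w + h t) * (w + h t + h'' t)) =
      2 * w ^ 3 + 6 * w * ∫ t in 0..π / 2, (h t ^ 2 - 1 / 2 * h' t ^ 2) * cos t := by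
  set I := Icc (-(π / 2)) (π / 2)
  have hpi : 0 ≤ π / 2 := by positivity
  have hneg : ∀ t ∈ I, -t ∈ I := fun t ht => ⟨neg_le_neg ht.2, by linarith [ht.1]⟩
  have heven : ∀ t ∈ I, h' (-t) = h' t :=
    fun t => even_of_hasDerivWithinAt_of_odd (uniqueDiffOn_Icc (by linarith [pi_pos])) hneg hodd hh
  have hhalf : uIcc 0 (π / 2) ⊆ I := by
    rw [uIcc_of_le hpi]
    exact Icc_subset_Icc (by linarith) le_rfl
  have hhc : ContinuousOn h I := fun t ht => (hh t ht).continuousWithinAt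
  have hh'c : ContinuousOn h' I := fun t ht => (hh' t ht).continuousWithinAt
  have hGint : IntervalIntegrable (volumeReducedIntegrand (fun u => w + h u) h') volume
      (-(π / 2)) (π / 2) :=
    ((continuousOn_const.add hhc).volumeReducedIntegrand hh'c).intervalIntegrable_of_Icc
      (by linarith)
  have hFint : IntervalIntegrable (fun t => (h t ^ 2 - 1 / 2 * h' t ^ 2) * cos t) volume 0
      (π / 2) := by
    have hcont : ContinuousOn (fun t => (h t ^ 2 - 1 / 2 * h' t ^ 2) * cos t) I := by fun_prop
    exact (hcont.mono hhalf).intervalIntegrable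
  have hbc_neg : h' (-(π / 2)) = 0 := by
    rw [heven _ (right_mem_Icc.2 (by linarith)), hbc]
  rw [integral_supportCurve_eq (by linarith) (fun t ht => (hh t ht).const_add w) hh' hh'',
    volumeBoundaryTerm_eq_zero cos_pi_div_two hbc,
    volumeBoundaryTerm_eq_zero (by rw [cos_neg, cos_pi_div_two]) hbc_neg, sub_zero, zero_add,
    integral_neg_eq_integral_add_comp_neg hGint,
    integral_congr fun t ht => volumeReducedIntegrand_add_comp_neg (hodd t (hhalf ht))
      (heven t (hhalf ht)),
    integral_add ((continuous_cos.intervalIntegrable _ _).const_mul _) (hFint.const_mul _),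
    intervalIntegral.integral_const_mul, intervalIntegral.integral_const_mul, integral_cos,
    sin_pi_div_two, sin_zero, sub_zero, mul_one]

theorem volume_formula (w : ℝ) (h h' h'' x y x' y' : ℝ → ℝ)
    (hh : ∀ t ∈ Icc (-(π/2)) (π/2), HasDerivWithinAt h (h' t) (Icc (-(π/2)) (π/2)) t)
    (hh' : ∀ t ∈ Icc (-(π/2)) (π/2), HasDerivWithinAt h' (h'' t) (Icc (-(π/2)) (π/2)) t)
    (hh''cont : ContinuousOn h'' (Icc (-(π/2)) (π/2)))
    (hodd : ∀ t ∈ Icc (-(π/2)) (π/2), h (-t) = - h t)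
    (hbc : h' (π/2) = 0)
    (hx : ∀ t, x t = (w + h t) * Real.cos t - h' t * Real.sin t)
    (hy : ∀ t, y t = (w + h t) * Real.sin t + h' t * Real.cos t)
    (hx' : ∀ t ∈ Icc (-(π/2)) (π/2), HasDerivWithinAt x (x' t) (Icc (-(π/2)) (π/2)) t)
    (hy' : ∀ t ∈ Icc (-(π/2)) (π/2), HasDerivWithinAt y (y' t) (Icc (-(π/2)) (π/2)) t) :
    (2 * π / 3) * ∫ t in (-(π/2))..(π/2), x t * (y' t * x t - y t * x' t)
      = 4 * π * (w ^ 3 / 3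
          + w * ∫ t in (0:ℝ)..(π/2), (h t ^ 2 - (1/2) * h' t ^ 2) * Real.cos t) := by
  have hI : UniqueDiffOn ℝ (Icc (-(π / 2)) (π / 2)) := uniqueDiffOn_Icc (by linarith [pi_pos])
  have hcross : ∀ t ∈ uIcc (-(π / 2)) (π / 2), x t * (y' t * x t - y t * x' t) =
      ((w + h t) * cos t - h' t * sin t) * ((w + h t) * ((w + h t) + h'' t)) := by
    intro t ht
    rw [uIcc_of_le (by linarith [pi_pos])] at ht
    exact supportCurve_cross_eq (hI t ht) ((hh t ht).const_add w) (hh' t ht) hx hy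
      (hx' t ht) (hy' t ht)
  rw [integral_congr hcross, integral_supportCurve_of_odd hh hh' hh''cont hodd hbc]
  ring
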